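/- arXiv:1512.01452 — 5 statements merged into one kernel-verified Lean document; each statement's English description precedes it below -/
import Mathlib

section
/- Let a, ρ > 0. There exists a constant C > 0, depending only on a and ρ, such that for every measurable ψ : ℝ → ℂ with ∫_ℝ |ψ(ξ)|² e^{a e^{ρξ}} dξ < ∞ and f(z) = (2π)^{-1/2} ∫_ℝ ψ(ξ) e^{zξ} dξ, one has for all z with Re z > 0: |f(z)| ≤ C·(∫_ℝ |ψ(ξ)|² e^{a e^{ρξ}} dξ)^{1/2}·(Re z)^{1/4}·(2/a)^{(Re z)/ρ}·Γ((Re z)/ρ), where Γ is the real Gamma function. (Growth estimate for functions in M²_{a,ρ}: every f ∈ M²_{a,ρ} satisfies |f(z)| ≤ C‖f‖ (Re z)^{1/4} (2/a)^{(Re z)/ρ} Γ((Re z)/ρ).) -/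
/-! By Cauchy–Schwarz against the weight `e^{a e^{ρξ}}`,
`|f(z)|² ≤ (2π)⁻¹ ‖ψ‖² ∫ e^{2xξ - a e^{ρξ}} dξ` with `x = Re z`. The substitution `t = a e^{ρξ}`
turns this integral into `Γ(2x/ρ) / (ρ a^{2x/ρ})`, and the duplication formula together with
`Γ(s + 1/2) ≤ √s Γ(s)` (log-convexity of `Γ`) gives `Γ(2s) ≤ 2^{2s} √s Γ(s)²`; taking square
roots yields the bound with `s = x/ρ`. -/

open MeasureTheory Complex

namespace Real

open Set

theorem Gamma_add_half_le {s : ℝ} (hs : 0 < s) : Gamma (s + 1 / 2) ≤ √s * Gamma s := by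
  have hΓ := (Gamma_pos_of_pos hs).le
  calc Gamma (s + 1 / 2) = Gamma (1 / 2 * s + 1 / 2 * (s + 1)) := by ring_nf
    _ ≤ Gamma s ^ (1 / 2 : ℝ) * Gamma (s + 1) ^ (1 / 2 : ℝ) :=
      Gamma_mul_add_mul_le_rpow_Gamma_mul_rpow_Gamma hs (by linarith) (by norm_num)
        (by norm_num) (by norm_num)
    _ = √s * Gamma s := by
      rw [Gamma_add_one hs.ne', mul_rpow hs.le hΓ, sqrt_eq_rpow, mul_left_comm,
        ← rpow_add_of_nonneg hΓ (by norm_num) (by norm_num)]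
      norm_num

theorem Gamma_two_mul_le {s : ℝ} (hs : 0 < s) :
    Gamma (2 * s) ≤ 2 ^ (2 * s) * √s * Gamma s ^ 2 := by
  have h2 : (2 : ℝ) ^ (1 - 2 * s) * 2 ^ (2 * s) = 2 := by
    rw [← rpow_add two_pos]; norm_num
  have hπ : 1 ≤ 2 * √π := by
    nlinarith [one_le_sqrt.2 (by linarith [pi_gt_three] : 1 ≤ π)]
  calc Gamma (2 * s) ≤ Gamma (2 * s) * (2 * √π) :=
        le_mul_of_one_le_right (Gamma_pos_of_pos (by positivity)).le hπ
    _ = Gamma (2 * s) * (2 ^ (1 - 2 * s) * 2 ^ (2 * s)) * √π := by rw [h2]; ring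
    _ = Gamma s * Gamma (s + 1 / 2) * 2 ^ (2 * s) := by
        rw [Gamma_mul_Gamma_add_half_of_pos hs]; ring
    _ ≤ Gamma s * (√s * Gamma s) * 2 ^ (2 * s) := by
        gcongr; exact Gamma_add_half_le hs
    _ = 2 ^ (2 * s) * √s * Gamma s ^ 2 := by ring

section ChangeOfVariables

variable {E : Type*} [NormedAddCommGroup E] [NormedSpace ℝ E]

theorem integral_comp_exp (g : ℝ → E) : ∫ x, exp x • g (exp x) = ∫ y in Ioi 0, g y := by
  rw [← range_exp, ← image_univ, ← setIntegral_univ]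
  simpa [abs_of_pos (exp_pos _)] using (integral_image_eq_integral_abs_deriv_smul
    MeasurableSet.univ (fun x _ ↦ (hasDerivAt_exp x).hasDerivWithinAt)
    exp_injective.injOn g).symm

theorem integrable_comp_exp_iff (g : ℝ → E) :
    Integrable (fun x ↦ exp x • g (exp x)) ↔ IntegrableOn g (Ioi 0) := by
  rw [← range_exp, ← image_univ, ← integrableOn_univ]
  simpa [abs_of_pos (exp_pos _)] using (integrableOn_image_iff_integrableOn_abs_deriv_smul
    MeasurableSet.univ (fun x _ ↦ (hasDerivAt_exp x).hasDerivWithinAt)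
    exp_injective.injOn g).symm

end ChangeOfVariables

theorem exp_smul_rpow_mul_exp_neg (s b u : ℝ) :
    exp u • (exp u ^ (s - 1) * exp (-(b * exp u))) = exp (s * u - b * exp u) := by
  rw [smul_eq_mul, ← exp_mul, ← exp_add, ← exp_add]; ring_nf

theorem integrable_exp_mul_sub_mul_exp {s b : ℝ} (hs : 0 < s) (hb : 0 < b) :
    Integrable fun u ↦ exp (s * u - b * exp u) := by
  have h := integrableOn_rpow_mul_exp_neg_mul_rpow (p := 1) (s := s - 1) (by linarith) one_pos hb
  simp only [rpow_one, neg_mul] at h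
  simpa only [exp_smul_rpow_mul_exp_neg] using (integrable_comp_exp_iff _).2 h

theorem integral_exp_mul_sub_mul_exp {s b : ℝ} (hs : 0 < s) (hb : 0 < b) :
    ∫ u, exp (s * u - b * exp u) = (1 / b) ^ s * Gamma s := by
  simp_rw [← exp_smul_rpow_mul_exp_neg s b,
    integral_comp_exp (fun t ↦ t ^ (s - 1) * exp (-(b * t))),
    integral_rpow_mul_exp_neg_mul_Ioi hs hb]

theorem integrable_exp_mul_sub_mul_exp_mul {c a ρ : ℝ} (hc : 0 < c) (ha : 0 < a) (hρ : 0 < ρ) :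
    Integrable fun ξ ↦ exp (c * ξ - a * exp (ρ * ξ)) := by
  have hcρ (ξ : ℝ) : c / ρ * (ρ * ξ) = c * ξ := by field_simp
  simpa only [hcρ] using
    (integrable_exp_mul_sub_mul_exp (div_pos hc hρ) ha).comp_mul_left' hρ.ne'

theorem integral_exp_mul_sub_mul_exp_mul {c a ρ : ℝ} (hc : 0 < c) (ha : 0 < a) (hρ : 0 < ρ) :
    ∫ ξ, exp (c * ξ - a * exp (ρ * ξ)) = ρ⁻¹ * ((1 / a) ^ (c / ρ) * Gamma (c / ρ)) := by
  have h := Measure.integral_comp_mul_left (fun u ↦ exp (c / ρ * u - a * exp u)) ρ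
  have hcρ (ξ : ℝ) : c / ρ * (ρ * ξ) = c * ξ := by field_simp
  simp only [hcρ] at h
  rw [h, integral_exp_mul_sub_mul_exp (div_pos hc hρ) ha, abs_of_pos (inv_pos.2 hρ), smul_eq_mul]

theorem sqrt_integral_exp_sub_le {x a ρ : ℝ} (hx : 0 < x) (ha : 0 < a) (hρ : 0 < ρ) :
    √(∫ ξ, exp (2 * x * ξ - a * exp (ρ * ξ))) ≤
      (2 / a) ^ (x / ρ) * (x / ρ) ^ (1 / 4 : ℝ) * Gamma (x / ρ) / √ρ := by
  set s := x / ρ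
  have hs : 0 < s := by positivity
  have h2a : ((2 / a) ^ s) ^ 2 = (1 / a) ^ (2 * s) * 2 ^ (2 * s) := by
    rw [← rpow_natCast, ← rpow_mul (by positivity), ← mul_rpow (by positivity) zero_le_two]
    ring_nf
  have hs4 : (s ^ (1 / 4 : ℝ)) ^ 2 = √s := by
    rw [← rpow_natCast, ← rpow_mul hs.le, sqrt_eq_rpow]; norm_num
  rw [integral_exp_mul_sub_mul_exp_mul (by positivity) ha hρ, show 2 * x / ρ = 2 * s by ring]
  calc √(ρ⁻¹ * ((1 / a) ^ (2 * s) * Gamma (2 * s)))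
      ≤ √(ρ⁻¹ * ((1 / a) ^ (2 * s) * (2 ^ (2 * s) * √s * Gamma s ^ 2))) := by
        gcongr; exact Gamma_two_mul_le hs
    _ = √(((2 / a) ^ s * s ^ (1 / 4 : ℝ) * Gamma s / √ρ) ^ 2) := by
        rw [div_pow, mul_pow, mul_pow, h2a, hs4, sq_sqrt hρ.le]
        ring_nf
    _ = _ := sqrt_sq (by have := Gamma_pos_of_pos hs; positivity)

end Real

theorem integral_mul_le_sqrt_mul_sqrt {α : Type*} [MeasurableSpace α] {μ : Measure α}
    {f g : α → ℝ} (hf : 0 ≤ f) (hg : 0 ≤ g) (hf2 : MemLp f 2 μ) (hg2 : MemLp g 2 μ) :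
    ∫ x, f x * g x ∂μ ≤ √(∫ x, f x ^ 2 ∂μ) * √(∫ x, g x ^ 2 ∂μ) := by
  have h := integral_mul_le_Lp_mul_Lq_of_nonneg Real.HolderConjugate.two_two
    (Filter.Eventually.of_forall hf) (Filter.Eventually.of_forall hg)
    (by simpa using hf2) (by simpa using hg2)
  simpa only [Real.rpow_two, Real.sqrt_eq_rpow] using h

theorem norm_integral_mul_cexp_le {ψ : ℝ → ℂ} {φ : ℝ → ℝ} (hψ : AEStronglyMeasurable ψ)
    (hφ : Measurable φ) (z : ℂ) (hψφ : Integrable fun ξ ↦ ‖ψ ξ‖ ^ 2 * Real.exp (φ ξ))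
    (hφz : Integrable fun ξ ↦ Real.exp (2 * z.re * ξ - φ ξ)) :
    ‖∫ ξ : ℝ, ψ ξ * exp (z * ξ)‖ ≤
      √(∫ ξ, ‖ψ ξ‖ ^ 2 * Real.exp (φ ξ)) * √(∫ ξ, Real.exp (2 * z.re * ξ - φ ξ)) := by
  set f : ℝ → ℝ := fun ξ ↦ ‖ψ ξ‖ * Real.exp (φ ξ / 2)
  set g : ℝ → ℝ := fun ξ ↦ Real.exp (z.re * ξ - φ ξ / 2)
  have hf2 (ξ : ℝ) : f ξ ^ 2 = ‖ψ ξ‖ ^ 2 * Real.exp (φ ξ) := by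
    rw [mul_pow, ← Real.exp_nat_mul]; ring_nf
  have hg2 (ξ : ℝ) : g ξ ^ 2 = Real.exp (2 * z.re * ξ - φ ξ) := by
    rw [← Real.exp_nat_mul]; ring_nf
  have hfg (ξ : ℝ) : ‖ψ ξ * exp (z * ξ)‖ = f ξ * g ξ := by
    rw [norm_mul, norm_exp, mul_assoc, ← Real.exp_add]; simp
  have hfm : AEStronglyMeasurable f := hψ.norm.mul (hφ.div_const 2).exp.aestronglyMeasurable
  have hgm : AEStronglyMeasurable g := by fun_prop
  calc ‖∫ ξ : ℝ, ψ ξ * exp (z * ξ)‖ ≤ ∫ ξ, f ξ * g ξ := by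
        simpa only [hfg] using norm_integral_le_integral_norm (fun ξ : ℝ ↦ ψ ξ * exp (z * ξ))
    _ ≤ _ := by
      simp_rw [← hf2, ← hg2]
      exact integral_mul_le_sqrt_mul_sqrt (fun ξ ↦ by positivity) (fun ξ ↦ by positivity)
        ((memLp_two_iff_integrable_sq hfm).2 (by simpa only [hf2] using hψφ))
        ((memLp_two_iff_integrable_sq hgm).2 (by simpa only [hg2] using hφz))

/-- Growth estimate for functions in `M²_{a,ρ}`: there is `C > 0` (depending only on `a, ρ`)
such that every `f(z) = (2π)^{-1/2} ∫ ψ(ξ) e^{zξ} dξ`, with `ψ ∈ L²(ℝ, e^{a e^{ρξ}} dξ)`,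
satisfies `|f(z)| ≤ C ‖ψ‖ (Re z)^{1/4} (2/a)^{Re z/ρ} Γ(Re z/ρ)` on the right half-plane. -/
theorem stmt_3 (a ρ : ℝ) (ha : 0 < a) (hρ : 0 < ρ) :
    ∃ C > 0, ∀ ψ : ℝ → ℂ, Measurable ψ →
      Integrable (fun ξ : ℝ => ‖ψ ξ‖ ^ 2 * Real.exp (a * Real.exp (ρ * ξ))) →
      ∀ z : ℂ, 0 < z.re →
        ‖(Real.sqrt (2 * Real.pi))⁻¹ • ∫ ξ : ℝ, ψ ξ * Complex.exp (z * (ξ : ℂ))‖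
          ≤ C * Real.sqrt (∫ ξ : ℝ, ‖ψ ξ‖ ^ 2 * Real.exp (a * Real.exp (ρ * ξ)))
            * z.re ^ ((1 : ℝ) / 4) * (2 / a) ^ (z.re / ρ) * Real.Gamma (z.re / ρ) := by
  refine ⟨(√(2 * Real.pi))⁻¹ * ((√ρ)⁻¹ * (ρ ^ (1 / 4 : ℝ))⁻¹), by positivity,
    fun ψ hψ hψw z hz ↦ ?_⟩
  have hB := Real.integrable_exp_mul_sub_mul_exp_mul (by positivity : 0 < 2 * z.re) ha hρ
  calc ‖(√(2 * Real.pi))⁻¹ • ∫ ξ : ℝ, ψ ξ * exp (z * ξ)‖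
      = (√(2 * Real.pi))⁻¹ * ‖∫ ξ : ℝ, ψ ξ * exp (z * ξ)‖ := by
        rw [norm_smul, Real.norm_of_nonneg (by positivity)]
    _ ≤ (√(2 * Real.pi))⁻¹ * (√(∫ ξ, ‖ψ ξ‖ ^ 2 * Real.exp (a * Real.exp (ρ * ξ))) *
          √(∫ ξ, Real.exp (2 * z.re * ξ - a * Real.exp (ρ * ξ)))) := by
        gcongr
        exact norm_integral_mul_cexp_le hψ.aestronglyMeasurable (by fun_prop) z hψw hB
    _ ≤ (√(2 * Real.pi))⁻¹ * (√(∫ ξ, ‖ψ ξ‖ ^ 2 * Real.exp (a * Real.exp (ρ * ξ))) *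
          ((2 / a) ^ (z.re / ρ) * (z.re / ρ) ^ (1 / 4 : ℝ) * Real.Gamma (z.re / ρ) / √ρ)) := by
        gcongr
        exact Real.sqrt_integral_exp_sub_le hz ha hρ
    _ = _ := by
        rw [Real.div_rpow hz.le hρ.le]
        ring
end

section
/- Let a, ρ > 0 and let φ : (0,∞) → ℂ be measurable with ∫_0^∞ |φ(ξ)|² e^{a ξ^ρ} ξ^{-1} dξ < ∞. Then for every z ∈ ℂ with x = Re z > 0, the Mellin transform Mφ(z) = (2π)^{-1/2} ∫_0^∞ φ(t) t^{z-1} dt satisfies |Mφ(z)| ≤ (2πρ)^{-1/2}·(∫_0^∞ |φ(ξ)|² e^{a ξ^ρ} ξ^{-1} dξ)^{1/2}·a^{-x/ρ}·Γ(2x/ρ)^{1/2}, where Γ is the real Gamma function. -/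
/-!
On `(0, ∞)` write `‖φ t · t^(z-1)‖ = √(F t) · √(G t)` with `F t = ‖φ t‖² e^{a t^ρ} / t` the given
weight and `G t = t^(2x-1) e^{-a t^ρ}`. Cauchy–Schwarz bounds the Mellin integral by
`(∫ F)^{1/2} (∫ G)^{1/2}`, and the substitution `u = a t^ρ` gives `∫ G = a^{-2x/ρ} Γ(2x/ρ) / ρ`.
-/

open MeasureTheory Complex

theorem memLp_two_sqrt {α : Type*} [MeasurableSpace α] {μ : Measure α} {H : α → ℝ}
    (hH : Integrable H μ) (hH0 : 0 ≤ᵐ[μ] H) : MemLp (fun t => √(H t)) 2 μ := by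
  refine (memLp_two_iff_integrable_sq
    (Real.continuous_sqrt.comp_aestronglyMeasurable hH.aestronglyMeasurable)).2 ?_
  refine hH.congr ?_
  filter_upwards [hH0] with t ht
  exact (Real.sq_sqrt ht).symm

theorem norm_integral_le_sqrt_integral_mul_sqrt_integral {α E : Type*} [MeasurableSpace α]
    [NormedAddCommGroup E] [NormedSpace ℝ E] {μ : Measure α} {h : α → E} {F G : α → ℝ}
    (hF : Integrable F μ) (hG : Integrable G μ) (hF0 : 0 ≤ᵐ[μ] F) (hG0 : 0 ≤ᵐ[μ] G)
    (hh : ∀ᵐ t ∂μ, ‖h t‖ ≤ √(F t) * √(G t)) :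
    ‖∫ t, h t ∂μ‖ ≤ √(∫ t, F t ∂μ) * √(∫ t, G t ∂μ) := by
  have hF2 := memLp_two_sqrt hF hF0
  have hG2 := memLp_two_sqrt hG hG0
  have hsq : ∀ {H : α → ℝ}, 0 ≤ᵐ[μ] H → ∫ t, √(H t) ^ (2 : ℝ) ∂μ = ∫ t, H t ∂μ := fun hH0 =>
    integral_congr_ae <| by
      filter_upwards [hH0] with t ht
      rw [Real.rpow_two, Real.sq_sqrt ht]
  calc ‖∫ t, h t ∂μ‖
      ≤ ∫ t, ‖h t‖ ∂μ := norm_integral_le_integral_norm _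
    _ ≤ ∫ t, √(F t) * √(G t) ∂μ :=
        integral_mono_of_nonneg (.of_forall fun _ => norm_nonneg _) (hF2.integrable_mul hG2) hh
    _ ≤ (∫ t, √(F t) ^ (2 : ℝ) ∂μ) ^ (1 / (2 : ℝ)) * (∫ t, √(G t) ^ (2 : ℝ) ∂μ) ^ (1 / (2 : ℝ)) :=
        integral_mul_le_Lp_mul_Lq_of_nonneg Real.HolderConjugate.two_two
          (.of_forall fun _ => Real.sqrt_nonneg _) (.of_forall fun _ => Real.sqrt_nonneg _)
          (by simpa using hF2) (by simpa using hG2)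
    _ = √(∫ t, F t ∂μ) * √(∫ t, G t ∂μ) := by
        rw [hsq hF0, hsq hG0, ← Real.sqrt_eq_rpow, ← Real.sqrt_eq_rpow]

theorem norm_mul_cpow_sub_one_eq_sqrt_mul_sqrt (a ρ : ℝ) {t : ℝ} (ht : 0 < t) (w z : ℂ) :
    ‖w * (t : ℂ) ^ (z - 1)‖ =
      √(‖w‖ ^ 2 * Real.exp (a * t ^ ρ) / t) * √(t ^ (2 * z.re - 1) * Real.exp (-a * t ^ ρ)) := by
  have hprod : ‖w‖ ^ 2 * Real.exp (a * t ^ ρ) / t * (t ^ (2 * z.re - 1) * Real.exp (-a * t ^ ρ))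
      = (‖w‖ * t ^ (z.re - 1)) ^ 2 := by
    rw [show 2 * z.re - 1 = (z.re - 1) + (z.re - 1) + 1 by ring, Real.rpow_add ht,
      Real.rpow_add ht, Real.rpow_one, neg_mul, Real.exp_neg]
    field_simp
  rw [← Real.sqrt_mul (by positivity), hprod, Real.sqrt_sq (by positivity), norm_mul,
    norm_cpow_eq_rpow_re_of_pos ht, sub_re, one_re]

theorem sqrt_rpow_neg_two_mul_div {a : ℝ} (ha : 0 < a) (x ρ : ℝ) :
    √(a ^ (-(2 * x) / ρ)) = Real.exp (-(x / ρ) * Real.log a) := by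
  rw [Real.rpow_def_of_pos ha, ← Real.exp_half]
  ring_nf

theorem stmt_6_general (a ρ : ℝ) (ha : 0 < a) (hρ : 0 < ρ) (φ : ℝ → ℂ)
    (hφ : IntegrableOn (fun ξ : ℝ => ‖φ ξ‖ ^ 2 * Real.exp (a * ξ ^ ρ) / ξ) (Set.Ioi 0)) :
    ∀ z : ℂ, 0 < z.re →
      ‖(Real.sqrt (2 * Real.pi))⁻¹ • ∫ t in Set.Ioi (0 : ℝ), φ t * (t : ℂ) ^ (z - 1)‖
        ≤ (Real.sqrt (2 * Real.pi * ρ))⁻¹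
          * Real.sqrt (∫ ξ in Set.Ioi (0 : ℝ), ‖φ ξ‖ ^ 2 * Real.exp (a * ξ ^ ρ) / ξ)
          * Real.exp (-(z.re / ρ) * Real.log a)
          * Real.sqrt (Real.Gamma (2 * z.re / ρ)) := by
  intro z hz
  have hG : IntegrableOn (fun t : ℝ => t ^ (2 * z.re - 1) * Real.exp (-a * t ^ ρ)) (Set.Ioi 0) :=
    integrableOn_rpow_mul_exp_neg_mul_rpow (by linarith) hρ ha
  have hpos : ∀ᵐ t ∂volume.restrict (Set.Ioi (0 : ℝ)), 0 < t :=
    ae_restrict_mem measurableSet_Ioi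
  have hbound := norm_integral_le_sqrt_integral_mul_sqrt_integral hφ hG
    (hpos.mono fun t ht => by positivity) (hpos.mono fun t ht => by positivity)
    (hpos.mono fun t ht => (norm_mul_cpow_sub_one_eq_sqrt_mul_sqrt a ρ ht (φ t) z).le)
  rw [_root_.integral_rpow_mul_exp_neg_mul_rpow hρ (by linarith) ha, sub_add_cancel,
    Real.sqrt_mul (by positivity), Real.sqrt_mul (by positivity),
    sqrt_rpow_neg_two_mul_div ha, one_div, Real.sqrt_inv] at hbound
  rw [norm_smul, Real.norm_of_nonneg (by positivity), Real.sqrt_mul (by positivity) ρ, mul_inv]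
  calc _ ≤ (√(2 * Real.pi))⁻¹ * _ := mul_le_mul_of_nonneg_left hbound (by positivity)
    _ = _ := by ring

/-- Pointwise bound for the Mellin transform of `φ ∈ L²((0,∞), e^{aξ^ρ} dξ/ξ)`:
`|Mφ(z)| ≤ (2πρ)^{-1/2} ‖φ‖ a^{-x/ρ} Γ(2x/ρ)^{1/2}` for `x = Re z > 0`. -/
theorem stmt_6 (a ρ : ℝ) (ha : 0 < a) (hρ : 0 < ρ) (φ : ℝ → ℂ)
    (hmeas : Measurable φ)
    (hφ : IntegrableOn (fun ξ : ℝ => ‖φ ξ‖ ^ 2 * Real.exp (a * ξ ^ ρ) / ξ) (Set.Ioi 0)) :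
    ∀ z : ℂ, 0 < z.re →
      ‖(Real.sqrt (2 * Real.pi))⁻¹ • ∫ t in Set.Ioi (0 : ℝ), φ t * (t : ℂ) ^ (z - 1)‖
        ≤ (Real.sqrt (2 * Real.pi * ρ))⁻¹
          * Real.sqrt (∫ ξ in Set.Ioi (0 : ℝ), ‖φ ξ‖ ^ 2 * Real.exp (a * ξ ^ ρ) / ξ)
          * Real.exp (-(z.re / ρ) * Real.log a)
          * Real.sqrt (Real.Gamma (2 * z.re / ρ)) :=
  stmt_6_general a ρ ha hρ φ hφ
end

section
/- Let a, ρ > 0, let p > 2, and let w ∈ ℂ with Re w > 0. Define K(z,w) = (2πρ)^{-1}·exp(-((z + conj(w))/ρ)·log a)·Γ((z + conj(w))/ρ), where Γ is the complex Gamma function. Then Σ_{n=0}^∞ (aⁿ/n!) ∫_ℝ |K(ρn/2 + iy, w)|^p dy = +∞; that is, the reproducing kernel K(·,w) of M²_{a,ρ} does not belong to L^p of the measure ω_{a,ρ} = Σ_{n≥0} (aⁿ/n!) δ_{ρn/2} ⊗ dy. -/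
/-!
On the line `Re z = ρn/2` the kernel is `(2πρ)⁻¹ a^{-σ} Γ(σ + it)` with `σ = n/2 + Re w/ρ` and
`t = (y - Im w)/ρ`. Comparing the Euler integrands of `Γ(σ)` and `Re Γ(σ + it)` by means of
`1 - cos u ≤ u²/2` and `log² x ≤ x² + x⁻²` gives `Γ(σ) - Re Γ(σ + it) ≤ t²/2 (Γ(σ+2) + Γ(σ-2))`,
hence `|Γ(σ + it)| ≥ Γ(σ)/2` on an interval of length `2ρ/(σ+1)` around `y = Im w`. So the
`n`-th term of the series is at least a constant times `(aⁿ/n!) (a^{-σ} Γ(σ))^p / (σ+1)`.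
Along even `n = 2m` the ratio of consecutive such bounds is of order `m^{p-2}`, which tends to
infinity since `p > 2`, so the series diverges by the ratio test.
-/

open MeasureTheory Complex Set Filter

lemma Real.sq_log_le_sq_add_inv_sq {x : ℝ} (hx : 0 < x) :
    Real.log x ^ 2 ≤ x ^ 2 + x⁻¹ ^ 2 := by
  rcases le_total 1 x with h | h
  · have h0 : 0 ≤ Real.log x := Real.log_nonneg h
    have h1 : Real.log x ≤ x := Real.log_le_self hx.le
    nlinarith [sq_nonneg x⁻¹]
  · have h0 : Real.log x ≤ 0 := Real.log_nonpos hx.le h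
    have h1 : -Real.log x ≤ x⁻¹ := by
      rw [← Real.log_inv]
      exact Real.log_le_self (inv_pos.2 hx).le
    nlinarith [sq_nonneg x]

lemma Complex.re_GammaIntegrand (σ t : ℝ) {x : ℝ} (hx : 0 < x) :
    ((Real.exp (-x) : ℂ) * (x : ℂ) ^ ((σ + t * I : ℂ) - 1)).re
      = Real.exp (-x) * x ^ (σ - 1) * Real.cos (t * Real.log x) := by
  rw [cpow_def_of_ne_zero (ofReal_ne_zero.mpr hx.ne'), ← ofReal_log hx.le, re_ofReal_mul, exp_re,
    Real.rpow_def_of_pos hx]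
  simp only [mul_re, ofReal_re, sub_re, add_re, I_re, mul_zero, ofReal_im, I_im, mul_one, sub_self,
    add_zero, one_re, sub_im, add_im, mul_im, zero_add, one_im, sub_zero, zero_mul]
  ring_nf

lemma Gamma_sub_re_Gamma_add_mul_I_le (σ t : ℝ) (hσ : 2 < σ) :
    Real.Gamma σ - (Complex.Gamma (σ + t * I)).re
      ≤ t ^ 2 / 2 * (Real.Gamma (σ + 2) + Real.Gamma (σ - 2)) := by
  have hs : 0 < (σ + t * I : ℂ).re := by
    simp only [add_re, ofReal_re, mul_re, I_re, mul_zero, ofReal_im, I_im, mul_one, sub_self,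
      add_zero]
    linarith
  set F : ℝ → ℂ := fun x => (Real.exp (-x) : ℂ) * (x : ℂ) ^ ((σ + t * I : ℂ) - 1)
  set f : ℝ → ℝ := fun x => Real.exp (-x) * x ^ (σ - 1)
  set g : ℝ → ℝ := fun x => Real.exp (-x) * x ^ (σ - 1) * Real.cos (t * Real.log x)
  set h : ℝ → ℝ := fun x =>
    Real.exp (-x) * x ^ ((σ + 2) - 1) + Real.exp (-x) * x ^ ((σ - 2) - 1)
  have hF : EqOn (fun x => (F x).re) g (Ioi 0) := fun x hx => Complex.re_GammaIntegrand σ t hx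
  have hf : IntegrableOn f (Ioi 0) := Real.GammaIntegral_convergent (by linarith)
  have hg : IntegrableOn g (Ioi 0) :=
    IntegrableOn.congr_fun (Integrable.re (GammaIntegral_convergent hs)) hF measurableSet_Ioi
  have hplus : IntegrableOn (fun x => Real.exp (-x) * x ^ ((σ + 2) - 1)) (Ioi 0) :=
    Real.GammaIntegral_convergent (by linarith)
  have hminus : IntegrableOn (fun x => Real.exp (-x) * x ^ ((σ - 2) - 1)) (Ioi 0) :=
    Real.GammaIntegral_convergent (by linarith)
  have hpt : ∀ x ∈ Ioi (0 : ℝ), f x - g x ≤ t ^ 2 / 2 * h x := by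
    intro x (hx : 0 < x)
    have hx_plus : x ^ ((σ + 2) - 1) = x ^ (σ - 1) * x ^ 2 := by
      rw [show (σ + 2) - 1 = (σ - 1) + (2 : ℕ) by push_cast; ring,
        Real.rpow_add_natCast hx.ne']
    have hx_minus : x ^ ((σ - 2) - 1) = x ^ (σ - 1) * x⁻¹ ^ 2 := by
      rw [show (σ - 2) - 1 = (σ - 1) + (-2 : ℤ) by push_cast; ring,
        Real.rpow_add_intCast hx.ne', zpow_neg, inv_pow, zpow_ofNat]
    have hcos := Real.one_sub_sq_div_two_le_cos (x := t * Real.log x)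
    have hlog := Real.sq_log_le_sq_add_inv_sq hx
    have hfx : 0 ≤ f x := by positivity
    calc f x - g x = f x * (1 - Real.cos (t * Real.log x)) := by ring
      _ ≤ f x * (t ^ 2 / 2 * (x ^ 2 + x⁻¹ ^ 2)) := by
        gcongr
        nlinarith [sq_nonneg t]
      _ = t ^ 2 / 2 * h x := by simp only [f, h, hx_plus, hx_minus]; ring
  calc Real.Gamma σ - (Complex.Gamma (σ + t * I)).re
      = ∫ x in Ioi 0, f x - g x := by
        rw [integral_sub hf hg, Real.Gamma_eq_integral (by linarith),
          Gamma_eq_integral hs, GammaIntegral, ← RCLike.re_eq_complex_re,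
          ← integral_re (GammaIntegral_convergent hs)]
        exact congrArg _ (setIntegral_congr_fun measurableSet_Ioi hF)
    _ ≤ ∫ x in Ioi 0, t ^ 2 / 2 * h x :=
        setIntegral_mono_on (hf.sub hg) ((hplus.add hminus).const_mul _) measurableSet_Ioi hpt
    _ = t ^ 2 / 2 * (Real.Gamma (σ + 2) + Real.Gamma (σ - 2)) := by
        rw [integral_const_mul, integral_add hplus hminus, Real.Gamma_eq_integral (by linarith),
          Real.Gamma_eq_integral (by linarith)]

lemma Gamma_div_two_le_re_Gamma_add_mul_I {σ t : ℝ} (hσ : 3 ≤ σ) (ht : |t| * (σ + 1) ≤ 1) :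
    Real.Gamma σ / 2 ≤ (Complex.Gamma (σ + t * I)).re := by
  have hplus : Real.Gamma (σ + 2) = (σ + 1) * σ * Real.Gamma σ := by
    rw [show σ + 2 = σ + 1 + 1 by ring, Real.Gamma_add_one (by linarith),
      Real.Gamma_add_one (by linarith)]
    ring
  have hminus : Real.Gamma σ = (σ - 1) * (σ - 2) * Real.Gamma (σ - 2) := by
    conv_lhs => rw [show σ = σ - 2 + 1 + 1 by ring]
    rw [Real.Gamma_add_one (by linarith), Real.Gamma_add_one (by linarith)]
    ring
  have hpos : 0 < Real.Gamma (σ - 2) := Real.Gamma_pos_of_pos (by linarith)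
  have hsum : Real.Gamma (σ + 2) + Real.Gamma (σ - 2) ≤ (σ + 1) ^ 2 * Real.Gamma σ := by
    have h1 : 1 ≤ (σ + 1) * (σ - 1) * (σ - 2) := by
      nlinarith [mul_le_mul (by linarith : (4 : ℝ) ≤ σ + 1) (by linarith : (2 : ℝ) ≤ σ - 1)
        (by norm_num) (by linarith)]
    rw [hplus, hminus]
    nlinarith [mul_le_mul_of_nonneg_left h1 hpos.le]
  have ht2 : t ^ 2 * (σ + 1) ^ 2 ≤ 1 := by
    rw [← sq_abs, ← mul_pow]
    exact pow_le_one₀ (by positivity) ht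
  have hΓ : 0 < Real.Gamma σ := Real.Gamma_pos_of_pos (by linarith)
  have := Gamma_sub_re_Gamma_add_mul_I_le σ t (by linarith)
  nlinarith [sq_nonneg t]

noncomputable def reproducingKernel (a ρ : ℝ) (z w : ℂ) : ℂ :=
  ((2 * Real.pi * ρ : ℝ) : ℂ)⁻¹ *
    Complex.exp (-((z + starRingEnd ℂ w) / (ρ : ℂ)) * (Real.log a : ℂ)) *
    Complex.Gamma ((z + starRingEnd ℂ w) / (ρ : ℂ))

lemma norm_reproducingKernel {a ρ : ℝ} (ha : 0 < a) (hρ : 0 < ρ) (z w : ℂ) :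
    ‖reproducingKernel a ρ z w‖ = (2 * Real.pi * ρ)⁻¹ * a ^ (-((z + starRingEnd ℂ w) / ρ).re)
      * ‖Complex.Gamma ((z + starRingEnd ℂ w) / ρ)‖ := by
  rw [reproducingKernel, norm_mul, norm_mul, norm_inv, norm_real,
    Real.norm_of_nonneg (mul_pos Real.two_pi_pos hρ).le, norm_exp, Real.rpow_def_of_pos ha]
  simp [mul_comm]

lemma ofReal_add_mul_I_add_conj_div_ofReal (ρ x y : ℝ) (w : ℂ) :
    ((x : ℂ) + y * I + starRingEnd ℂ w) / ρ
      = (((x + w.re) / ρ : ℝ) : ℂ) + (((y - w.im) / ρ : ℝ) : ℂ) * I := by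
  apply Complex.ext
  · simp [Complex.div_ofReal_re]
  · simp [Complex.div_ofReal_im, sub_eq_add_neg]

lemma ofReal_le_lintegral_norm_reproducingKernel_rpow {a ρ p σ : ℝ} (ha : 0 < a) (hρ : 0 < ρ)
    (hp : 0 ≤ p) {w : ℂ} {x : ℝ} (hσ : σ = (x + w.re) / ρ) (hσ3 : 3 ≤ σ) :
    ENNReal.ofReal (((2 * Real.pi * ρ)⁻¹ / 2 * (a ^ (-σ) * Real.Gamma σ)) ^ p * (2 * ρ / (σ + 1)))
      ≤ ∫⁻ y : ℝ, ENNReal.ofReal (‖reproducingKernel a ρ (x + y * I) w‖ ^ p) := by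
  set r := ρ / (σ + 1)
  set M := (2 * Real.pi * ρ)⁻¹ / 2 * (a ^ (-σ) * Real.Gamma σ)
  have hM : 0 ≤ M := by
    have : 0 < σ := by linarith
    positivity
  have hbound : ∀ y ∈ Icc (w.im - r) (w.im + r), M ≤ ‖reproducingKernel a ρ (x + y * I) w‖ := by
    intro y hy
    have ht : |(y - w.im) / ρ| * (σ + 1) ≤ 1 := by
      rw [abs_div, abs_of_pos hρ, div_mul_eq_mul_div, div_le_one hρ,
        ← le_div_iff₀ (by linarith)]
      exact abs_sub_le_iff.2 ⟨by linarith [hy.2], by linarith [hy.1]⟩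
    rw [norm_reproducingKernel ha hρ, ofReal_add_mul_I_add_conj_div_ofReal, ← hσ]
    have := (Gamma_div_two_le_re_Gamma_add_mul_I hσ3 ht).trans (re_le_norm _)
    simp only [add_re, ofReal_re, mul_re, I_re, mul_zero, ofReal_im, I_im, mul_one, sub_self,
      add_zero]
    calc M = (2 * Real.pi * ρ)⁻¹ * a ^ (-σ) * (Real.Gamma σ / 2) := by ring
      _ ≤ _ := by gcongr
  calc ENNReal.ofReal (M ^ p * (2 * ρ / (σ + 1)))
      = ∫⁻ _ in Icc (w.im - r) (w.im + r), ENNReal.ofReal (M ^ p) := by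
        rw [setLIntegral_const, Real.volume_Icc, ← ENNReal.ofReal_mul (by positivity)]
        congr 2
        ring
    _ ≤ ∫⁻ y in Icc (w.im - r) (w.im + r),
          ENNReal.ofReal (‖reproducingKernel a ρ (x + y * I) w‖ ^ p) :=
        setLIntegral_mono' measurableSet_Icc fun y hy =>
          ENNReal.ofReal_le_ofReal (Real.rpow_le_rpow hM (hbound y hy) hp)
    _ ≤ _ := setLIntegral_le_lintegral _ _

section EvenTerms

variable {a c p : ℝ}

/-- Up to a constant factor, the lower bound for the term of index `2m` of the series,
with `c = Re w / ρ`. -/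
noncomputable def evenTermMinorant (a c p : ℝ) (m : ℕ) : ℝ :=
  a ^ (2 * m) / ((2 * m).factorial : ℝ) * (a ^ (-((m : ℝ) + c)) * Real.Gamma (m + c)) ^ p
    / (m + c + 1)

noncomputable def evenTermRatio (a c p : ℝ) (m : ℕ) : ℝ :=
  a ^ 2 / ((2 * m + 1) * (2 * m + 2)) * (((m : ℝ) + c) / a) ^ p * ((m + c + 1) / (m + c + 2))

lemma evenTermMinorant_pos (ha : 0 < a) (hc : 0 < c) (m : ℕ) : 0 < evenTermMinorant a c p m := by
  unfold evenTermMinorant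
  positivity

lemma evenTermMinorant_succ (ha : 0 < a) (hc : 0 < c) (m : ℕ) :
    evenTermMinorant a c p (m + 1) = evenTermMinorant a c p m * evenTermRatio a c p m := by
  have hσ : (0 : ℝ) < m + c := by positivity
  have hfac : ((2 * (m + 1)).factorial : ℝ) = (2 * m + 1) * (2 * m + 2) * (2 * m).factorial := by
    rw [show 2 * (m + 1) = 2 * m + 1 + 1 by ring, Nat.factorial_succ, Nat.factorial_succ]
    push_cast
    ring
  have hgamma : (a ^ (-(((m + 1 : ℕ) : ℝ) + c)) * Real.Gamma ((m + 1 : ℕ) + c)) ^ p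
      = (a ^ (-((m : ℝ) + c)) * Real.Gamma (m + c)) ^ p * (((m : ℝ) + c) / a) ^ p := by
    rw [← Real.mul_rpow (by positivity) (by positivity),
      show (((m + 1 : ℕ) : ℝ) + c) = (m + c) + 1 by push_cast; ring,
      Real.Gamma_add_one hσ.ne', neg_add, Real.rpow_add ha, Real.rpow_neg_one]
    congr 1
    field_simp
  simp only [evenTermMinorant, evenTermRatio, hfac, hgamma]
  push_cast
  field_simp
  ring

lemma eventually_two_le_evenTermRatio (ha : 0 < a) (hc : 0 < c) (hp : 2 < p) :
    ∀ᶠ m : ℕ in atTop, 2 ≤ evenTermRatio a c p m := by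
  have hσ : Tendsto (fun m : ℕ => ((m : ℝ) + c) / a) atTop atTop :=
    (tendsto_atTop_add_const_right _ c tendsto_natCast_atTop_atTop).atTop_div_const ha
  filter_upwards [((tendsto_rpow_atTop (by linarith : 0 < p - 2)).comp hσ).eventually_ge_atTop 100,
    eventually_ge_atTop 1] with m hX hm
  have hm : (1 : ℝ) ≤ m := by exact_mod_cast hm
  set σ := (m : ℝ) + c with hσ_def
  set X := (σ / a) ^ (p - 2)
  have hX' : 100 ≤ X := hX
  have hpow : (σ / a) ^ p = (σ / a) ^ 2 * X := by
    rw [← Real.rpow_natCast, ← Real.rpow_add (by positivity)]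
    norm_num
  have hratio : evenTermRatio a c p m
      = σ ^ 2 * X * (σ + 1) / ((2 * m + 1) * (2 * m + 2) * (σ + 2)) := by
    rw [evenTermRatio, ← hσ_def, hpow]
    field_simp
  have hden : (2 * m + 1) * (2 * m + 2) * (σ + 2) ≤ 36 * σ ^ 3 := by
    have := mul_le_mul (mul_le_mul (by linarith : 2 * (m : ℝ) + 1 ≤ 3 * σ)
      (by linarith : 2 * (m : ℝ) + 2 ≤ 4 * σ) (by positivity) (by positivity))
      (by linarith : σ + 2 ≤ 3 * σ) (by positivity) (by positivity)
    linarith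
  have hnum : 100 * σ ^ 3 ≤ σ ^ 2 * X * (σ + 1) := by
    have := mul_le_mul_of_nonneg_left hX' (by positivity : 0 ≤ σ ^ 2)
    nlinarith
  rw [hratio, le_div_iff₀ (by positivity)]
  nlinarith [pow_pos (by positivity : 0 < σ) 3]

lemma not_summable_evenTermMinorant (ha : 0 < a) (hc : 0 < c) (hp : 2 < p) :
    ¬ Summable (evenTermMinorant a c p) := by
  have hpos := evenTermMinorant_pos (p := p) ha hc
  refine not_summable_of_ratio_norm_eventually_ge one_lt_two
    (Frequently.of_forall fun m => (norm_pos_iff.2 (hpos m).ne').ne') ?_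
  filter_upwards [eventually_two_le_evenTermRatio ha hc hp] with m hm
  rw [Real.norm_of_nonneg (hpos m).le, Real.norm_of_nonneg (hpos _).le,
    evenTermMinorant_succ ha hc]
  nlinarith [hpos m]

end EvenTerms

lemma ofReal_mul_evenTermMinorant_le {a ρ p : ℝ} (ha : 0 < a) (hρ : 0 < ρ) (hp : 0 ≤ p) {w : ℂ}
    {m : ℕ} (hm : 3 ≤ (m : ℝ) + w.re / ρ) :
    ENNReal.ofReal (((2 * Real.pi * ρ)⁻¹ / 2) ^ p * (2 * ρ) * evenTermMinorant a (w.re / ρ) p m)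
      ≤ ENNReal.ofReal (a ^ (2 * m) / ((2 * m).factorial : ℝ)) *
        ∫⁻ y : ℝ, ENNReal.ofReal (‖reproducingKernel a ρ
          (((ρ * ((2 * m : ℕ) : ℝ) / 2 : ℝ) : ℂ) + y * I) w‖ ^ p) := by
  set σ := (m : ℝ) + w.re / ρ with hσ_def
  have hσ : σ = (ρ * ((2 * m : ℕ) : ℝ) / 2 + w.re) / ρ := by
    rw [hσ_def]
    field_simp
    push_cast
    ring
  have hΓ : 0 < Real.Gamma σ := Real.Gamma_pos_of_pos (by linarith)
  have hsplit : ((2 * Real.pi * ρ)⁻¹ / 2) ^ p * (2 * ρ) * evenTermMinorant a (w.re / ρ) p m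
      = a ^ (2 * m) / ((2 * m).factorial : ℝ)
        * (((2 * Real.pi * ρ)⁻¹ / 2 * (a ^ (-σ) * Real.Gamma σ)) ^ p * (2 * ρ / (σ + 1))) := by
    rw [Real.mul_rpow (by positivity) (by positivity), evenTermMinorant]
    ring
  rw [hsplit, ENNReal.ofReal_mul (by positivity)]
  gcongr
  exact ofReal_le_lintegral_norm_reproducingKernel_rpow ha hρ hp hσ hm

/-- For `p > 2`, the reproducing kernel `K(·,w)` of `M²_{a,ρ}` does not belong to
`L^p(ω_{a,ρ})`, where `ω_{a,ρ} = Σₙ (aⁿ/n!) δ_{ρn/2} ⊗ dy`. -/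
theorem stmt_7 (a ρ p : ℝ) (ha : 0 < a) (hρ : 0 < ρ) (hp : 2 < p)
    (w : ℂ) (hw : 0 < w.re)
    (K : ℂ → ℂ → ℂ)
    (hK : ∀ z w : ℂ, K z w = ((2 * Real.pi * ρ : ℝ) : ℂ)⁻¹ *
      Complex.exp (-((z + starRingEnd ℂ w) / (ρ : ℂ)) * (Real.log a : ℂ)) *
      Complex.Gamma ((z + starRingEnd ℂ w) / (ρ : ℂ))) :
    ∑' n : ℕ, ENNReal.ofReal (a ^ n / (Nat.factorial n : ℝ)) *
      ∫⁻ y : ℝ, ENNReal.ofReal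
        (‖K (((ρ * n / 2 : ℝ) : ℂ) + y * Complex.I) w‖ ^ p) = ⊤ := by
  obtain rfl : K = reproducingKernel a ρ := funext₂ hK
  set L := ((2 * Real.pi * ρ)⁻¹ / 2) ^ p * (2 * ρ)
  have hL : 0 < L := by positivity
  have hc : 0 < w.re / ρ := by positivity
  have hdiv : ∑' m : ℕ, ENNReal.ofReal (L * evenTermMinorant a (w.re / ρ) p (m + 3)) = ⊤ := by
    refine ENNReal.tsum_coe_eq_top_iff_not_summable_coe.2 ?_
    simp_rw [Real.coe_toNNReal _ (mul_pos hL (evenTermMinorant_pos ha hc _)).le]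
    rw [summable_mul_left_iff hL.ne', summable_nat_add_iff 3]
    exact not_summable_evenTermMinorant ha hc hp
  have hlower := fun m : ℕ => ofReal_mul_evenTermMinorant_le (p := p) (w := w) (m := m + 3) ha hρ
    (by linarith) (by push_cast; linarith [m.cast_nonneg (α := ℝ)])
  refine top_le_iff.1 (hdiv ▸ (ENNReal.tsum_le_tsum hlower).trans ?_)
  exact ENNReal.tsum_comp_le_tsum_of_injective (fun m n h => by omega) _
end

section
/- Let 1 ≤ p < ∞ and let ν be a positive regular Borel measure on [0,∞) with 0 < ν([0,t)) < ∞ for every t > 0 and satisfying the doubling-type condition at the origin: there exists R > 0 such that ν([0,2t)) ≤ R·ν([0,t)) for all t > 0. Then for every compact set E contained in the open right half-plane R = {Re z > 0} there exists a constant C_E > 0 such that every function F holomorphic on R with ‖F‖_{A^p_ω}^p := sup_{r>0} ∫_{[0,∞)} ∫_ℝ |F(x+r+iy)|^p dy dν(x) < ∞ satisfies sup_{λ∈E} |F(λ)| ≤ C_E·‖F‖_{A^p_ω}. -/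
open MeasureTheory Complex
open scoped ENNReal

/-- The `p`-th power of the Zen space norm:
`‖F‖_{A^p_ω}^p = sup_{r>0} ∫_{[0,∞)} ∫_ℝ |F(x+r+iy)|^p dy dν(x)`. -/
noncomputable def zenNormPow (p : ℝ) (ν : Measure ℝ) (F : ℂ → ℂ) : ℝ≥0∞ :=
  ⨆ r ∈ Set.Ioi (0 : ℝ),
    ∫⁻ x : ℝ, (∫⁻ y : ℝ, ENNReal.ofReal (‖F (((x + r : ℝ) : ℂ) + y * Complex.I)‖ ^ p)) ∂ν

open Set Metric Real

/-!
Since `‖F‖ ^ p` is subharmonic (mean value property plus Jensen), `π ρ² ‖F z‖ ^ p` is at most the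
integral of `‖F‖ ^ p` over the disc of radius `ρ` about `z`, hence over any vertical strip
`x < Re w < x + L` containing that disc. With `2ρ ≤ Re z` and `Re z + ρ ≤ L` this holds for every
`x ∈ [0, ρ)`; integrating against `ν` over `[0, ρ)` and swapping with the integral over the shift
`r ∈ (0, L)` gives `π ρ² ‖F z‖ ^ p ν([0, ρ)) ≤ L ‖F‖_{A^p_ω}^p`, and `ν([0, ρ)) > 0`.
-/

theorem setLIntegral_Ioo_ofReal_id {ρ : ℝ} (hρ : 0 ≤ ρ) :
    ∫⁻ t in Ioo 0 ρ, ENNReal.ofReal t = ENNReal.ofReal (ρ ^ 2 / 2) := by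
  have hint : IntegrableOn (fun t : ℝ => t) (Ioo 0 ρ) :=
    continuous_id'.integrableOn_Icc.mono_set Ioo_subset_Icc_self
  rw [← ofReal_integral_eq_lintegral_ofReal hint
    ((ae_restrict_mem measurableSet_Ioo).mono fun t ht => ht.1.le),
    ← integral_Ioc_eq_integral_Ioo, ← intervalIntegral.integral_of_le hρ, integral_id]
  ring_nf

theorem add_polarCoord_symm_eq_circleMap (c : ℂ) (t θ : ℝ) :
    c + Complex.polarCoord.symm (t, θ) = circleMap c t θ := by
  simp [circleMap, exp_mul_I, ← ofReal_cos, ← ofReal_sin]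

theorem ofReal_sq_div_two_mul_le_setLIntegral_ball {g : ℂ → ℝ≥0∞} (hg : Measurable g)
    {c : ℂ} {ρ : ℝ} (hρ : 0 ≤ ρ) {a : ℝ≥0∞}
    (ha : ∀ t ∈ Ioo 0 ρ, a ≤ ∫⁻ θ in Ioo (-π) π, g (circleMap c t θ)) :
    ENNReal.ofReal (ρ ^ 2 / 2) * a ≤ ∫⁻ w in ball c ρ, g w := by
  have hmeas : Measurable fun q : ℝ × ℝ => ENNReal.ofReal q.1 * g (circleMap c q.1 q.2) := by
    unfold circleMap; fun_prop
  calc ENNReal.ofReal (ρ ^ 2 / 2) * a = ∫⁻ t in Ioo 0 ρ, ENNReal.ofReal t * a := by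
        rw [lintegral_mul_const _ ENNReal.measurable_ofReal, setLIntegral_Ioo_ofReal_id hρ]
    _ ≤ ∫⁻ t in Ioo 0 ρ, ∫⁻ θ in Ioo (-π) π, ENNReal.ofReal t * g (circleMap c t θ) := by
        refine setLIntegral_mono' measurableSet_Ioo fun t ht => ?_
        rw [lintegral_const_mul' _ _ ENNReal.ofReal_ne_top]
        gcongr
        exact ha t ht
    _ = ∫⁻ q in Ioo 0 ρ ×ˢ Ioo (-π) π, ENNReal.ofReal q.1 * g (circleMap c q.1 q.2) := by
        rw [Measure.volume_eq_prod, ← Measure.prod_restrict, lintegral_prod _ hmeas.aemeasurable]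
    _ = ∫⁻ q in Ioo 0 ρ ×ˢ Ioo (-π) π,
          ENNReal.ofReal q.1 • (ball c ρ).indicator g (c + Complex.polarCoord.symm q) := by
        refine setLIntegral_congr_fun (measurableSet_Ioo.prod measurableSet_Ioo) fun q hq => ?_
        have hmem : c + Complex.polarCoord.symm q ∈ ball c ρ := by
          rw [mem_ball, dist_eq_norm, add_sub_cancel_left, norm_polarCoord_symm,
            abs_of_pos hq.1.1]
          exact hq.1.2
        rw [indicator_of_mem hmem, smul_eq_mul, add_polarCoord_symm_eq_circleMap]
    _ ≤ ∫⁻ q in polarCoord.target,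
          ENNReal.ofReal q.1 • (ball c ρ).indicator g (c + Complex.polarCoord.symm q) :=
        lintegral_mono_set (polarCoord_target ▸ prod_mono Ioo_subset_Ioi_self subset_rfl)
    _ = ∫⁻ w in ball c ρ, g w := by
        rw [Complex.lintegral_comp_polarCoord_symm (fun w => (ball c ρ).indicator g (c + w)),
          lintegral_add_left_eq_self, lintegral_indicator measurableSet_ball]

theorem setLIntegral_re_preimage {g : ℂ → ℝ≥0∞} (hg : Measurable g) (s : Set ℝ) :
    ∫⁻ w in re ⁻¹' s, g w = ∫⁻ u in s, ∫⁻ y : ℝ, g (u + y * I) := by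
  have hpre : measurableEquivRealProd.symm ⁻¹' (re ⁻¹' s) = s ×ˢ univ := by
    ext q; simp
  have hsymm (q : ℝ × ℝ) : measurableEquivRealProd.symm q = q.1 + q.2 * I := by
    apply Complex.ext <;> simp
  rw [← volume_preserving_equiv_real_prod.symm.setLIntegral_comp_preimage_emb
    measurableEquivRealProd.symm.measurableEmbedding, hpre, Measure.volume_eq_prod,
    ← Measure.prod_restrict, Measure.restrict_univ, lintegral_prod _ (by fun_prop)]
  simp only [hsymm]

theorem setLIntegral_Ioo_comp_add_left (H : ℝ → ℝ≥0∞) (x L : ℝ) :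
    ∫⁻ r in Ioo 0 L, H (x + r) = ∫⁻ u in Ioo x (x + L), H u := by
  rw [(measurePreserving_add_left volume x).setLIntegral_comp_emb
    (MeasurableEquiv.addLeft x).measurableEmbedding, image_const_add_Ioo, add_zero]

theorem setLIntegral_setLIntegral_Ioo_add_le {ν : Measure ℝ} {X : Set ℝ} (hX : ν X ≠ ∞)
    {H : ℝ → ℝ≥0∞} (hH : Measurable H) {N : ℝ≥0∞}
    (hN : ∀ r > 0, ∫⁻ x in X, H (x + r) ∂ν ≤ N) (L : ℝ) :
    ∫⁻ x in X, (∫⁻ r in Ioo 0 L, H (x + r)) ∂ν ≤ ENNReal.ofReal L * N := by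
  have : IsFiniteMeasure (ν.restrict X) := isFiniteMeasure_restrict.mpr hX
  rw [lintegral_lintegral_swap (by exact (hH.comp measurable_add).aemeasurable)]
  calc ∫⁻ r in Ioo 0 L, ∫⁻ x in X, H (x + r) ∂ν ≤ ∫⁻ _ in Ioo 0 L, N :=
        setLIntegral_mono' measurableSet_Ioo fun r hr => hN r hr.1
    _ = ENNReal.ofReal L * N := by rw [setLIntegral_const, Real.volume_Ioo, sub_zero, mul_comm]

theorem ofReal_two_pi_mul_circleAverage {g : ℂ → ℝ} {c : ℂ} {R : ℝ}
    (hg : Continuous fun θ => g (circleMap c R θ)) (hg0 : ∀ θ, 0 ≤ g (circleMap c R θ)) :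
    ENNReal.ofReal (2 * π * circleAverage g c R)
      = ∫⁻ θ in Ioo (-π) π, ENNReal.ofReal (g (circleMap c R θ)) := by
  rw [circleAverage_eq_integral_add (-π), smul_eq_mul, ← mul_assoc,
    mul_inv_cancel₀ two_pi_pos.ne', one_mul,
    intervalIntegral.integral_comp_add_right (fun θ => g (circleMap c R θ)),
    intervalIntegral.integral_of_le (by linarith [pi_pos]),
    ofReal_integral_eq_lintegral_ofReal (hg.integrableOn_Icc.mono_set Ioc_subset_Icc_self)
      (Filter.Eventually.of_forall hg0),
    zero_add, two_mul, add_neg_cancel_right, Measure.restrict_congr_set Ioo_ae_eq_Ioc]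

theorem convexOn_norm_rpow {E : Type*} [SeminormedAddCommGroup E] [NormedSpace ℝ E] {p : ℝ}
    (hp : 1 ≤ p) : ConvexOn ℝ univ fun x : E => ‖x‖ ^ p := by
  refine ⟨convex_univ, fun x _ y _ a b ha hb hab => ?_⟩
  calc ‖a • x + b • y‖ ^ p ≤ (a * ‖x‖ + b * ‖y‖) ^ p := by
        gcongr
        refine (norm_add_le _ _).trans_eq ?_
        rw [norm_smul, norm_smul, Real.norm_of_nonneg ha, Real.norm_of_nonneg hb]
    _ ≤ a • ‖x‖ ^ p + b • ‖y‖ ^ p :=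
        (convexOn_rpow hp).2 (norm_nonneg x) (norm_nonneg y) ha hb hab

section Holomorphic

variable {E : Type*} [NormedAddCommGroup E] [NormedSpace ℂ E] [CompleteSpace E]
  {p : ℝ} {F : ℂ → E} {c : ℂ}

theorem norm_rpow_le_circleAverage (hp : 1 ≤ p) {R : ℝ} (hR : 0 < R)
    (hF : DiffContOnCl ℂ F (ball c R)) :
    ‖F c‖ ^ p ≤ circleAverage (fun w => ‖F w‖ ^ p) c R := by
  have hcont : Continuous fun θ => F (circleMap c R θ) := by
    refine hF.continuousOn.comp_continuous (continuous_circleMap c R) fun θ => ?_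
    rw [closure_ball c hR.ne']
    exact circleMap_mem_closedBall c hR.le θ
  have hp0 : 0 ≤ p := by linarith
  rw [← abs_of_pos hR] at hF
  rw [← hF.circleAverage, circleAverage_eq_intervalAverage, circleAverage_eq_intervalAverage]
  exact (convexOn_norm_rpow hp).map_set_average_le (μ := volume) (t := uIoc 0 (2 * π))
    (f := fun θ => F (circleMap c R θ))
    (continuous_norm.rpow_const fun _ => Or.inr hp0).continuousOn isClosed_univ (by simp)
    (by simp [ENNReal.mul_eq_top]) (by simp) hcont.integrableOn_uIoc
    (hcont.norm.rpow_const fun _ => Or.inr hp0).integrableOn_uIoc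

theorem ofReal_pi_mul_sq_mul_norm_rpow_le_lintegral_strip [MeasurableSpace E] [BorelSpace E]
    (hp : 1 ≤ p) (hFm : Measurable F) {U : Set ℂ} (hF : DifferentiableOn ℂ F U) {ρ : ℝ}
    (hρ : 0 ≤ ρ) (hU : closedBall c ρ ⊆ U) :
    ENNReal.ofReal (π * ρ ^ 2 * ‖F c‖ ^ p)
      ≤ ∫⁻ u in Ioo (c.re - ρ) (c.re + ρ), ∫⁻ y : ℝ, ENNReal.ofReal (‖F (u + y * I)‖ ^ p) := by
  have hgm : Measurable fun w => ENNReal.ofReal (‖F w‖ ^ p) := by fun_prop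
  have hcircle (t : ℝ) (ht : t ∈ Ioo 0 ρ) : ENNReal.ofReal (2 * π * ‖F c‖ ^ p)
      ≤ ∫⁻ θ in Ioo (-π) π, ENNReal.ofReal (‖F (circleMap c t θ)‖ ^ p) := by
    have htU : closedBall c t ⊆ U := (closedBall_subset_closedBall ht.2.le).trans hU
    have hcont : Continuous fun θ => ‖F (circleMap c t θ)‖ ^ p :=
      ((hF.continuousOn.mono htU).comp_continuous (continuous_circleMap c t)
        (circleMap_mem_closedBall c ht.1.le)).norm.rpow_const fun _ => Or.inr (by linarith)
    rw [← ofReal_two_pi_mul_circleAverage (g := fun w => ‖F w‖ ^ p) hcont fun θ => by positivity]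
    gcongr
    exact norm_rpow_le_circleAverage hp ht.1 (hF.diffContOnCl_ball htU)
  have hball : ball c ρ ⊆ re ⁻¹' Ioo (c.re - ρ) (c.re + ρ) := fun w hw => by
    have := (abs_re_le_norm (w - c)).trans_lt (mem_ball_iff_norm.mp hw)
    rw [sub_re, abs_lt] at this
    constructor <;> linarith
  calc ENNReal.ofReal (π * ρ ^ 2 * ‖F c‖ ^ p)
      = ENNReal.ofReal (ρ ^ 2 / 2) * ENNReal.ofReal (2 * π * ‖F c‖ ^ p) := by
        rw [← ENNReal.ofReal_mul (by positivity)]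
        ring_nf
    _ ≤ ∫⁻ w in ball c ρ, ENNReal.ofReal (‖F w‖ ^ p) :=
        ofReal_sq_div_two_mul_le_setLIntegral_ball hgm hρ hcircle
    _ ≤ ∫⁻ w in re ⁻¹' Ioo (c.re - ρ) (c.re + ρ), ENNReal.ofReal (‖F w‖ ^ p) :=
        lintegral_mono_set hball
    _ = _ := setLIntegral_re_preimage hgm _

end Holomorphic

theorem IsCompact.exists_forall_re_mem_Icc {K : Set ℂ} (hK : IsCompact K)
    (hK' : K ⊆ {z : ℂ | 0 < z.re}) : ∃ δ > 0, ∃ M > 0, ∀ z ∈ K, z.re ∈ Icc δ M := by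
  rcases K.eq_empty_or_nonempty with rfl | hne
  · exact ⟨1, one_pos, 1, one_pos, by simp⟩
  obtain ⟨z₀, hz₀, hmin⟩ := hK.exists_isMinOn hne continuous_re.continuousOn
  obtain ⟨M, hM⟩ := (hK.image continuous_re).bddAbove
  exact ⟨z₀.re, hK' hz₀, M, (hK' hz₀).trans_le (hM (mem_image_of_mem _ hz₀)),
    fun z hz => ⟨hmin hz, hM (mem_image_of_mem _ hz)⟩⟩

theorem setLIntegral_le_zenNormPow {p : ℝ} {ν : Measure ℝ} {F G : ℂ → ℂ}
    (hGF : ∀ w : ℂ, 0 < w.re → G w = F w) {X : Set ℝ} (hX : MeasurableSet X) (hX0 : X ⊆ Ici 0)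
    {r : ℝ} (hr : 0 < r) :
    ∫⁻ x in X, (∫⁻ y : ℝ, ENNReal.ofReal (‖G (((x + r : ℝ) : ℂ) + y * I)‖ ^ p)) ∂ν
      ≤ zenNormPow p ν F :=
  calc ∫⁻ x in X, (∫⁻ y : ℝ, ENNReal.ofReal (‖G (((x + r : ℝ) : ℂ) + y * I)‖ ^ p)) ∂ν
      = ∫⁻ x in X, (∫⁻ y : ℝ, ENNReal.ofReal (‖F (((x + r : ℝ) : ℂ) + y * I)‖ ^ p)) ∂ν := by
        refine setLIntegral_congr_fun hX fun x hx => lintegral_congr fun y => ?_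
        rw [hGF _ (by simpa using add_pos_of_nonneg_of_pos (hX0 hx) hr)]
    _ ≤ ∫⁻ x, (∫⁻ y : ℝ, ENNReal.ofReal (‖F (((x + r : ℝ) : ℂ) + y * I)‖ ^ p)) ∂ν :=
        setLIntegral_le_lintegral _ _
    _ ≤ zenNormPow p ν F := le_biSup (fun r : ℝ => ∫⁻ x, (∫⁻ y : ℝ,
          ENNReal.ofReal (‖F (((x + r : ℝ) : ℂ) + y * I)‖ ^ p)) ∂ν) hr

theorem ofReal_mul_measure_le_zenNormPow {p : ℝ} (hp : 1 ≤ p) {ν : Measure ℝ} {F : ℂ → ℂ}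
    (hF : DifferentiableOn ℂ F {w : ℂ | 0 < w.re}) {z : ℂ} {ρ L : ℝ} (hρ : 0 < ρ)
    (hρz : 2 * ρ ≤ z.re) (hzL : z.re + ρ ≤ L) (hν : ν (Ico 0 ρ) ≠ ∞) :
    ENNReal.ofReal (π * ρ ^ 2 * ‖F z‖ ^ p) * ν (Ico 0 ρ)
      ≤ ENNReal.ofReal L * zenNormPow p ν F := by
  classical
  -- `F` need not be measurable off the half-plane, which the norm never sees.
  set G := {w : ℂ | 0 < w.re}.indicator F
  have hGF (w : ℂ) (hw : 0 < w.re) : G w = F w :=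
    indicator_of_mem (s := {w : ℂ | 0 < w.re}) hw F
  have hGm : Measurable G := by
    simp only [G, ← piecewise_eq_indicator]
    exact hF.continuousOn.measurable_piecewise continuousOn_const
      (isOpen_lt continuous_const continuous_re).measurableSet
  have hG : DifferentiableOn ℂ G {w : ℂ | 0 < w.re} := hF.congr fun w hw => hGF w hw
  set H : ℝ → ℝ≥0∞ := fun u => ∫⁻ y : ℝ, ENNReal.ofReal (‖G (u + y * I)‖ ^ p)
  have hH : Measurable H := by
    refine Measurable.lintegral_prod_right' (f := fun q : ℝ × ℝ =>
      ENNReal.ofReal (‖G (q.1 + q.2 * I)‖ ^ p)) ?_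
    fun_prop
  have hdisk (x : ℝ) (hx : x ∈ Ico 0 ρ) :
      ENNReal.ofReal (π * ρ ^ 2 * ‖F z‖ ^ p) ≤ ∫⁻ r in Ioo 0 L, H (x + r) := by
    have hball : closedBall z ρ ⊆ {w : ℂ | 0 < w.re} := fun w hw => by
      have := (abs_re_le_norm (w - z)).trans (mem_closedBall_iff_norm.mp hw)
      rw [sub_re, abs_le] at this
      show 0 < w.re
      linarith
    calc ENNReal.ofReal (π * ρ ^ 2 * ‖F z‖ ^ p) = ENNReal.ofReal (π * ρ ^ 2 * ‖G z‖ ^ p) := by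
          rw [hGF z (by linarith)]
      _ ≤ ∫⁻ u in Ioo (z.re - ρ) (z.re + ρ), H u :=
          ofReal_pi_mul_sq_mul_norm_rpow_le_lintegral_strip hp hGm hG hρ.le hball
      _ ≤ ∫⁻ u in Ioo x (x + L), H u :=
          lintegral_mono_set (Ioo_subset_Ioo (by linarith [hx.2]) (by linarith [hx.1]))
      _ = ∫⁻ r in Ioo 0 L, H (x + r) := (setLIntegral_Ioo_comp_add_left H x L).symm
  calc ENNReal.ofReal (π * ρ ^ 2 * ‖F z‖ ^ p) * ν (Ico 0 ρ)
      = ∫⁻ _ in Ico 0 ρ, ENNReal.ofReal (π * ρ ^ 2 * ‖F z‖ ^ p) ∂ν :=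
        (setLIntegral_const _ _).symm
    _ ≤ ∫⁻ x in Ico 0 ρ, (∫⁻ r in Ioo 0 L, H (x + r)) ∂ν :=
        setLIntegral_mono' measurableSet_Ico hdisk
    _ ≤ ENNReal.ofReal L * zenNormPow p ν F :=
        setLIntegral_setLIntegral_Ioo_add_le hν hH
          (fun r hr => setLIntegral_le_zenNormPow hGF measurableSet_Ico (fun x hx => hx.1) hr) L

theorem stmt_10_general (p : ℝ) (hp : 1 ≤ p) (ν : Measure ℝ)
    (hνpos : ∀ t : ℝ, 0 < t → 0 < ν (Set.Ico 0 t))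
    (hνfin : ∀ t : ℝ, 0 < t → ν (Set.Ico 0 t) < ⊤)
    (E : Set ℂ) (hE : IsCompact E) (hE' : E ⊆ {z : ℂ | 0 < z.re}) :
    ∃ C > 0, ∀ F : ℂ → ℂ,
      DifferentiableOn ℂ F {z : ℂ | 0 < z.re} →
      zenNormPow p ν F < ⊤ →
      ∀ z ∈ E, ‖F z‖ ≤ C * (zenNormPow p ν F).toReal ^ (1 / p) := by
  obtain ⟨δ, hδ, M, hM, hEδM⟩ := hE.exists_forall_re_mem_Icc hE'
  have hρ : 0 < δ / 2 := by positivity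
  set m := (ν (Ico 0 (δ / 2))).toReal
  have hm : 0 < m := ENNReal.toReal_pos (hνpos _ hρ).ne' (hνfin _ hρ).ne
  set K := (M + δ / 2) / (π * (δ / 2) ^ 2 * m)
  have hK : 0 < K := by positivity
  refine ⟨K ^ (1 / p), by positivity, fun F hF hFfin z hz => ?_⟩
  set N := (zenNormPow p ν F).toReal
  have key := ENNReal.toReal_mono (ENNReal.mul_ne_top ENNReal.ofReal_ne_top hFfin.ne)
    (ofReal_mul_measure_le_zenNormPow (z := z) (L := M + δ / 2) hp hF hρ
      (by linarith [(hEδM z hz).1]) (by linarith [(hEδM z hz).2]) (hνfin _ hρ).ne)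
  rw [ENNReal.toReal_mul, ENNReal.toReal_mul, ENNReal.toReal_ofReal (by positivity),
    ENNReal.toReal_ofReal (by positivity)] at key
  have hpow : ‖F z‖ ^ p ≤ K * N := by
    rw [div_mul_eq_mul_div, le_div_iff₀ (by positivity)]
    linarith
  calc ‖F z‖ ≤ (K * N) ^ (1 / p) := by
        rw [one_div, Real.le_rpow_inv_iff_of_pos (norm_nonneg _) (by positivity) (by linarith)]
        exact hpow
    _ = K ^ (1 / p) * N ^ (1 / p) := Real.mul_rpow hK.le ENNReal.toReal_nonneg

/-- Functions in the Zen space `A^p_ω` are uniformly bounded on compact subsets of the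
right half-plane in terms of the `A^p_ω` norm. -/
theorem stmt_10 (p : ℝ) (hp : 1 ≤ p) (ν : Measure ℝ)
    (hν0 : ν (Set.Iio 0) = 0)
    (hνpos : ∀ t : ℝ, 0 < t → 0 < ν (Set.Ico 0 t))
    (hνfin : ∀ t : ℝ, 0 < t → ν (Set.Ico 0 t) < ⊤)
    (R : ℝ) (hR : 0 < R)
    (hdoub : ∀ t : ℝ, 0 < t → ν (Set.Ico 0 (2 * t)) ≤ ENNReal.ofReal R * ν (Set.Ico 0 t))
    (E : Set ℂ) (hE : IsCompact E) (hE' : E ⊆ {z : ℂ | 0 < z.re}) :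
    ∃ C > 0, ∀ F : ℂ → ℂ,
      DifferentiableOn ℂ F {z : ℂ | 0 < z.re} →
      zenNormPow p ν F < ⊤ →
      ∀ z ∈ E, ‖F z‖ ≤ C * (zenNormPow p ν F).toReal ^ (1 / p) :=
  stmt_10_general p hp ν hνpos hνfin E hE hE'
end

section
/- Define G : ℂ → ℂ by G(x+iy) = i/(1 + x + iy) if y > 0 and G(x+iy) = 0 if y ≤ 0, and for k = 1, 2, … define f_k(z) = (1+z)^{-1}·(exp(i e^{4kπiz}) − 1)·e^{-4kπiz}. Then each f_k is continuous on the closed right half-plane {Re z ≥ 0} and holomorphic on {Re z > 0}, the sequence converges to G in L²(ω_{2,1}), i.e. Σ_{n=0}^∞ (2ⁿ/n!) ∫_ℝ |f_k(n/2 + iy) − G(n/2 + iy)|² dy → 0 as k → ∞, and yet there is no function h holomorphic on {Re z > 0} such that, for every integer n ≥ 1, h(n/2 + iy) = G(n/2 + iy) for almost every y ∈ ℝ. (Hence the closure X²_{2,1} of the continuous-up-to-the-boundary holomorphic functions in L²(ω_{2,1}) contains elements that are not holomorphic in the right half-plane.) -/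
/-!
On the line `Re z = n/2` one has `e^{4kπiz} = e^{-4πky}` whatever `n` is, so
`f_k - G = (1+z)⁻¹ (φ(e^{-4πky}) - i·1_{y>0})` with `φ(t) = (e^{it} - 1)/t`. Since `|φ| ≤ 1`,
`φ(t) → i` as `t → 0⁺` and `φ(t) → 0` as `t → ∞`, and `|1+z|⁻² ≤ (1+y²)⁻¹` on the closed
right half-plane, every line integral is at most one `J_k → 0` (dominated convergence), and the
weights `2ⁿ/n!` are summable. A holomorphic `h` agreeing a.e. with `G` on one line `Re z = c > 0`
would, by the identity theorem, coincide with `i/(1+z)` (accumulating along `y > 0`) and with `0`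
(along `y < 0`) on the whole half-plane.
-/

open MeasureTheory Complex Filter Topology Set

noncomputable def expSlope (t : ℝ) : ℂ := (exp (I * t) - 1) / t

lemma norm_expSlope_le_one (t : ℝ) : ‖expSlope t‖ ≤ 1 := by
  rcases eq_or_ne t 0 with rfl | ht
  · simp [expSlope]
  rw [expSlope, norm_div, norm_real, div_le_one (norm_pos_iff.2 ht)]
  exact Real.norm_exp_I_mul_ofReal_sub_one_le

lemma norm_expSlope_le_two_div (t : ℝ) : ‖expSlope t‖ ≤ 2 / ‖t‖ := by
  rw [expSlope, norm_div, norm_real]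
  gcongr
  calc ‖exp (I * t) - 1‖ ≤ ‖exp (I * t)‖ + ‖(1 : ℂ)‖ := norm_sub_le _ _
    _ = 2 := by rw [mul_comm, norm_exp_ofReal_mul_I]; norm_num

lemma tendsto_expSlope_nhdsNE_zero : Tendsto expSlope (𝓝[≠] 0) (𝓝 I) := by
  have hderiv : HasDerivAt (fun t : ℝ => exp (I * t)) I 0 := by
    simpa using ((hasDerivAt_id (0 : ℝ)).ofReal_comp.const_mul I).cexp
  refine (hasDerivAt_iff_tendsto_slope.mp hderiv).congr fun t => ?_
  simp [slope_def_module, expSlope, div_eq_inv_mul]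

lemma tendsto_expSlope_atTop : Tendsto expSlope atTop (𝓝 0) := by
  refine squeeze_zero_norm' ?_ ((tendsto_abs_atTop_atTop.inv_tendsto_atTop).const_mul 2 |>.trans ?_)
  · filter_upwards with t
    simpa [div_eq_mul_inv] using norm_expSlope_le_two_div t
  · simp

lemma measurable_expSlope : Measurable expSlope := by
  unfold expSlope; fun_prop

noncomputable def upperStep (y : ℝ) : ℂ := if 0 < y then I else 0

lemma measurable_upperStep : Measurable upperStep :=
  Measurable.ite measurableSet_Ioi measurable_const measurable_const

lemma norm_upperStep_le_one (y : ℝ) : ‖upperStep y‖ ≤ 1 := by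
  unfold upperStep; split_ifs <;> simp

lemma tendsto_expSlope_exp_mul (y : ℝ) (hy : y ≠ 0) :
    Tendsto (fun k : ℕ => expSlope (Real.exp (-(4 * Real.pi * y) * k))) atTop
      (𝓝 (upperStep y)) := by
  rcases hy.lt_or_gt with hneg | hpos
  · rw [upperStep, if_neg hneg.not_gt]
    refine tendsto_expSlope_atTop.comp (Real.tendsto_exp_atTop.comp ?_)
    exact tendsto_natCast_atTop_atTop.const_mul_atTop (by nlinarith [Real.pi_pos])
  · rw [upperStep, if_pos hpos]
    refine tendsto_expSlope_nhdsNE_zero.comp <| tendsto_nhdsWithin_mono_right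
      (fun t ht => ne_of_gt ht) (Real.tendsto_exp_atBot_nhdsGT.comp ?_)
    exact tendsto_natCast_atTop_atTop.const_mul_atTop_of_neg (by nlinarith [Real.pi_pos])

noncomputable def approxSeq (k : ℕ) (z : ℂ) : ℂ :=
  (1 + z)⁻¹ * (exp (I * exp (4 * k * Real.pi * I * z)) - 1) / exp (4 * k * Real.pi * I * z)

noncomputable def stepInv (z : ℂ) : ℂ := if 0 < z.im then I / (1 + z) else 0

lemma one_add_ne_zero_of_re_nonneg {z : ℂ} (hz : 0 ≤ z.re) : 1 + z ≠ 0 := by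
  intro h
  have := congrArg re h
  simp at this
  linarith

lemma differentiableOn_approxSeq (k : ℕ) : DifferentiableOn ℂ (approxSeq k) {z | 0 ≤ z.re} := by
  intro z hz
  have := one_add_ne_zero_of_re_nonneg hz
  refine DifferentiableAt.differentiableWithinAt ?_
  unfold approxSeq
  fun_prop (disch := first | assumption | exact exp_ne_zero _)

lemma exp_mul_vertical (k n : ℕ) (y : ℝ) :
    exp (4 * k * Real.pi * I * (((n : ℝ) / 2 : ℝ) + y * I))
      = (Real.exp (-(4 * Real.pi * y) * k) : ℂ) := by
  have : 4 * k * Real.pi * I * (((n : ℝ) / 2 : ℝ) + y * I)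
      = (k * n : ℤ) * (2 * Real.pi * I) + (-(4 * Real.pi * y) * k : ℝ) := by
    push_cast
    linear_combination (4 * (k : ℂ) * Real.pi * y) * I_sq
  rw [this, exp_add, exp_int_mul_two_pi_mul_I, one_mul, ofReal_exp]

lemma approxSeq_sub_stepInv_vertical (k n : ℕ) (y : ℝ) :
    approxSeq k (((n : ℝ) / 2 : ℝ) + y * I) - stepInv (((n : ℝ) / 2 : ℝ) + y * I)
      = (1 + (((n : ℝ) / 2 : ℝ) + y * I))⁻¹ *
        (expSlope (Real.exp (-(4 * Real.pi * y) * k)) - upperStep y) := by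
  simp only [approxSeq, stepInv, exp_mul_vertical, expSlope, upperStep, add_im, ofReal_im,
    mul_im, I_re, I_im, ofReal_re, mul_one, mul_zero, add_zero, zero_add]
  split_ifs <;> ring_nf

lemma norm_inv_one_add_sq_le {x : ℝ} (hx : 0 ≤ x) (y : ℝ) :
    ‖(1 + (x + y * I))⁻¹‖ ^ 2 ≤ (1 + y ^ 2)⁻¹ := by
  rw [norm_inv, inv_pow, Complex.sq_norm, normSq_apply]
  have hre : (1 + (x + y * I)).re = 1 + x := by simp
  have him : (1 + (x + y * I)).im = y := by simp
  rw [hre, him]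
  exact inv_anti₀ (by positivity) (by nlinarith)

noncomputable def lineError (k : ℕ) (y : ℝ) : ℝ :=
  ‖expSlope (Real.exp (-(4 * Real.pi * y) * k)) - upperStep y‖ ^ 2 * (1 + y ^ 2)⁻¹

lemma lineError_nonneg (k : ℕ) (y : ℝ) : 0 ≤ lineError k y := by
  unfold lineError; positivity

lemma lineError_le (k : ℕ) (y : ℝ) : lineError k y ≤ 4 * (1 + y ^ 2)⁻¹ := by
  unfold lineError
  set t := Real.exp (-(4 * Real.pi * y) * k)
  have h : ‖expSlope t - upperStep y‖ ≤ 2 := (norm_sub_le _ _).trans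
    (by linarith [norm_expSlope_le_one t, norm_upperStep_le_one y])
  gcongr
  nlinarith [norm_nonneg (expSlope t - upperStep y)]

lemma norm_lineError_le (k : ℕ) : ∀ᵐ y : ℝ, ‖lineError k y‖ ≤ 4 * (1 + y ^ 2)⁻¹ :=
  .of_forall fun y => by
    rw [Real.norm_of_nonneg (lineError_nonneg k y)]; exact lineError_le k y

lemma measurable_lineError (k : ℕ) : Measurable (lineError k) := by
  unfold lineError
  have := measurable_expSlope
  have := measurable_upperStep
  fun_prop

lemma integrable_lineError (k : ℕ) : Integrable (lineError k) :=
  (integrable_inv_one_add_sq.const_mul 4).mono' (measurable_lineError k).aestronglyMeasurable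
    (norm_lineError_le k)

lemma tendsto_integral_lineError :
    Tendsto (fun k => ∫ y, lineError k y) atTop (𝓝 0) := by
  have hlim : ∀ᵐ y : ℝ, Tendsto (fun k => lineError k y) atTop (𝓝 0) := by
    filter_upwards [Measure.ae_ne volume (0 : ℝ)] with y hy
    simpa only [lineError, sub_self, norm_zero, zero_pow two_ne_zero, zero_mul] using
      (((tendsto_expSlope_exp_mul y hy).sub_const (upperStep y)).norm.pow 2).mul_const
        (1 + y ^ 2)⁻¹
  simpa using tendsto_integral_of_dominated_convergence _
    (fun k => (measurable_lineError k).aestronglyMeasurable)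
    (integrable_inv_one_add_sq.const_mul 4) norm_lineError_le hlim

lemma integral_sq_norm_approxSeq_sub_stepInv_le (k n : ℕ) :
    ∫ y : ℝ, ‖approxSeq k (((n : ℝ) / 2 : ℝ) + y * I) - stepInv (((n : ℝ) / 2 : ℝ) + y * I)‖ ^ 2
      ≤ ∫ y, lineError k y := by
  refine integral_mono_of_nonneg (.of_forall fun y => by positivity) (integrable_lineError k)
    (.of_forall fun y => ?_)
  beta_reduce
  rw [approxSeq_sub_stepInv_vertical, norm_mul, mul_pow, mul_comm, lineError]
  gcongr
  exact norm_inv_one_add_sq_le (by positivity) y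

lemma tendsto_tsum_mul_of_le {ι α : Type*} {l : Filter α} {c : ι → ℝ} (hc : Summable c)
    (hc0 : ∀ n, 0 ≤ c n) {a : α → ι → ℝ} {b : α → ℝ} (ha0 : ∀ k n, 0 ≤ a k n)
    (hab : ∀ k n, a k n ≤ b k) (hb : Tendsto b l (𝓝 0)) :
    Tendsto (fun k => ∑' n, c n * a k n) l (𝓝 0) := by
  refine squeeze_zero (fun k => tsum_nonneg fun n => mul_nonneg (hc0 n) (ha0 k n)) (fun k => ?_)
    (by simpa using hb.const_mul (∑' n, c n))
  have hle : ∀ n, c n * a k n ≤ c n * b k := fun n => mul_le_mul_of_nonneg_left (hab k n) (hc0 n)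
  calc ∑' n, c n * a k n ≤ ∑' n, c n * b k :=
        Summable.tsum_le_tsum hle (.of_nonneg_of_le (fun n => mul_nonneg (hc0 n) (ha0 k n)) hle
          (hc.mul_right _)) (hc.mul_right _)
    _ = (∑' n, c n) * b k := tsum_mul_right

lemma frequently_nhdsNE_of_ae {X : Type*} [TopologicalSpace X] [T1Space X] [MeasurableSpace X]
    {μ : Measure X} [μ.IsOpenPosMeasure] {p : X → Prop} (hp : ∀ᵐ x ∂μ, p x) (x : X)
    [(𝓝[≠] x).NeBot] : ∃ᶠ y in 𝓝[≠] x, p y :=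
  mem_closure_ne_iff_frequently_within.mp ((Measure.dense_of_ae hp).sdiff_singleton x x)

lemma eqOn_of_ae_eq_on_vertical_line {U : Set ℂ} {h g F : ℂ → ℂ} (hh : AnalyticOnNhd ℂ h U)
    (hg : AnalyticOnNhd ℂ g U) (hU : IsPreconnected U) {c y₀ : ℝ} (hmem : c + y₀ * I ∈ U)
    (hae : ∀ᵐ y : ℝ, h (c + y * I) = F (c + y * I))
    (hFg : ∀ᶠ y : ℝ in 𝓝 y₀, F (c + y * I) = g (c + y * I)) : EqOn h g U := by
  have hline : Tendsto (fun y : ℝ => (c : ℂ) + y * I) (𝓝[≠] y₀) (𝓝[≠] (c + y₀ * I)) := by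
    refine (Continuous.continuousWithinAt (by fun_prop)).tendsto_nhdsWithin fun y hy heq => hy ?_
    simpa using congrArg im heq
  refine hh.eqOn_of_preconnected_of_frequently_eq hg hU hmem (hline.frequently ?_)
  exact ((frequently_nhdsNE_of_ae hae y₀).and_eventually (hFg.filter_mono nhdsWithin_le_nhds)).mono
    fun y hy => hy.1.trans hy.2

lemma stepInv_vertical_of_pos (c : ℝ) {y : ℝ} (hy : 0 < y) :
    stepInv (c + y * I) = I / (1 + (c + y * I)) := by
  simp [stepInv, hy]

lemma stepInv_vertical_of_neg (c : ℝ) {y : ℝ} (hy : y < 0) : stepInv (c + y * I) = 0 := by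
  simp [stepInv, hy.not_gt]

lemma not_exists_differentiableOn_ae_eq_stepInv {c : ℝ} (hc : 0 < c) :
    ¬ ∃ h : ℂ → ℂ, DifferentiableOn ℂ h {z : ℂ | 0 < z.re} ∧
      ∀ᵐ y : ℝ, h (c + y * I) = stepInv (c + y * I) := by
  rintro ⟨h, hd, hae⟩
  have hU : IsOpen {z : ℂ | 0 < z.re} := isOpen_lt continuous_const continuous_re
  have hconn : IsPreconnected {z : ℂ | 0 < z.re} := (convex_halfSpace_re_gt 0).isPreconnected
  have hh := hd.analyticOnNhd hU
  have hinv : AnalyticOnNhd ℂ (fun z => I / (1 + z)) {z : ℂ | 0 < z.re} :=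
    DifferentiableOn.analyticOnNhd (fun z hz =>
      (differentiableAt_const I |>.div (by fun_prop) (one_add_ne_zero_of_re_nonneg
        hz.le)).differentiableWithinAt) hU
  have hmem : ∀ y : ℝ, (c + y * I : ℂ) ∈ {z : ℂ | 0 < z.re} := fun y => by simpa using hc
  have h_inv := eqOn_of_ae_eq_on_vertical_line hh hinv hconn (hmem 1) hae
    ((eventually_gt_nhds one_pos).mono fun y hy => stepInv_vertical_of_pos _ hy)
  have h_zero := eqOn_of_ae_eq_on_vertical_line hh analyticOnNhd_const hconn (hmem (-1)) hae
    ((eventually_lt_nhds neg_one_lt_zero).mono fun y hy => stepInv_vertical_of_neg _ hy)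
  have h_one : (1 : ℂ) ∈ {z : ℂ | 0 < z.re} := by norm_num
  simpa using (h_inv h_one).symm.trans (h_zero h_one)

/-- The closure `X²_{2,1}` of the continuous-up-to-the-boundary holomorphic functions in
`L²(ω_{2,1})` contains non-holomorphic elements: the functions
`f_k(z) = (1+z)⁻¹ (exp(i e^{4kπiz}) - 1) e^{-4kπiz}`, continuous on the closed right
half-plane and holomorphic on the open one, converge in `L²(ω_{2,1})` to
`G(x+iy) = i/(1+x+iy)` for `y > 0`, `G = 0` for `y ≤ 0`, and no holomorphic function on
the right half-plane agrees a.e. with `G` on every line `Re z = n/2`, `n ≥ 1`. -/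
theorem stmt_19 (G : ℂ → ℂ)
    (hG : ∀ z : ℂ, G z = if 0 < z.im then Complex.I / (1 + z) else 0)
    (f : ℕ → ℂ → ℂ)
    (hf : ∀ k : ℕ, ∀ z : ℂ, f k z = (1 + z)⁻¹ *
      (Complex.exp (Complex.I * Complex.exp (4 * (k : ℂ) * Real.pi * Complex.I * z)) - 1) /
      Complex.exp (4 * (k : ℂ) * Real.pi * Complex.I * z)) :
    (∀ k : ℕ, 1 ≤ k → ContinuousOn (f k) {z : ℂ | 0 ≤ z.re}
      ∧ DifferentiableOn ℂ (f k) {z : ℂ | 0 < z.re})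
    ∧ Filter.Tendsto (fun k : ℕ => ∑' n : ℕ, (2 : ℝ) ^ n / (Nat.factorial n : ℝ) *
        ∫ y : ℝ, ‖f k ((((n : ℝ) / 2 : ℝ) : ℂ) + y * Complex.I)
          - G ((((n : ℝ) / 2 : ℝ) : ℂ) + y * Complex.I)‖ ^ 2)
        Filter.atTop (nhds 0)
    ∧ ¬ ∃ h : ℂ → ℂ, DifferentiableOn ℂ h {z : ℂ | 0 < z.re} ∧
        ∀ n : ℕ, 1 ≤ n → ∀ᵐ y : ℝ,
          h ((((n : ℝ) / 2 : ℝ) : ℂ) + y * Complex.I)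
            = G ((((n : ℝ) / 2 : ℝ) : ℂ) + y * Complex.I) := by
  obtain rfl : f = approxSeq := funext fun k => funext (hf k)
  obtain rfl : G = stepInv := funext hG
  refine ⟨fun k _ => ⟨(differentiableOn_approxSeq k).continuousOn,
    (differentiableOn_approxSeq k).mono fun z (hz : 0 < z.re) => hz.le⟩, ?_, ?_⟩
  · exact tendsto_tsum_mul_of_le (Real.summable_pow_div_factorial 2) (fun n => by positivity)
      (fun k n => integral_nonneg fun y => by positivity) integral_sq_norm_approxSeq_sub_stepInv_le
      tendsto_integral_lineError
  · rintro ⟨h, hd, hae⟩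
    exact not_exists_differentiableOn_ae_eq_stepInv (by positivity) ⟨h, hd, hae 1 le_rfl⟩
end
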